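/- arXiv:1506.05667 — 2 statements merged into one kernel-verified Lean document; each statement's English description precedes it below -/
import Mathlib

section
/- Let 𝒢 be a family of connected non-trivial graphs on a common vertex set V, let H be a non-trivial graph and let B be an adjacency basis of H. Then for every family ℋ ⊆ 𝒢_B(H) such that H ∈ ℋ, Sd(𝒢⊙ℋ) = |V| · dim_A(H). -/
open SimpleGraph

/-- `S` is a metric generator for `G`: every pair of distinct vertices is
distinguished by some element of `S` via the shortest-path distance. -/
def IsMetricGen {V : Type*} (G : SimpleGraph V) (S : Set V) : Prop :=
  ∀ u v : V, u ≠ v → ∃ s ∈ S, G.dist s u ≠ G.dist s v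

/-- `S` is an adjacency generator for `G`. -/
def IsAdjGen {V : Type*} (G : SimpleGraph V) (S : Set V) : Prop :=
  ∀ x y : V, x ∉ S → y ∉ S → x ≠ y → ∃ s ∈ S, Xor' (G.Adj s x) (G.Adj s y)

/-- `S` is a simultaneous metric generator for the family `𝒢`. -/
def IsSimMetricGen {V : Type*} (𝒢 : Set (SimpleGraph V)) (S : Set V) : Prop :=
  ∀ G ∈ 𝒢, IsMetricGen G S

/-- `S` is a simultaneous adjacency generator for the family `ℋ`. -/
def IsSimAdjGen {V : Type*} (ℋ : Set (SimpleGraph V)) (S : Set V) : Prop :=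
  ∀ H ∈ ℋ, IsAdjGen H S

/-- The simultaneous metric dimension of a family of graphs. -/
noncomputable def Sd {V : Type*} (𝒢 : Set (SimpleGraph V)) : ℕ :=
  sInf {n | ∃ S : Set V, S.ncard = n ∧ IsSimMetricGen 𝒢 S}

/-- The simultaneous adjacency dimension of a family of graphs. -/
noncomputable def SdA {V : Type*} (ℋ : Set (SimpleGraph V)) : ℕ :=
  sInf {n | ∃ S : Set V, S.ncard = n ∧ IsSimAdjGen ℋ S}

/-- The adjacency dimension of a graph. -/
noncomputable def adjDim {V : Type*} (G : SimpleGraph V) : ℕ := SdA {G}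

/-- `B` is an adjacency basis of `G`. -/
def IsAdjBasis {V : Type*} (G : SimpleGraph V) (B : Set V) : Prop :=
  IsAdjGen G B ∧ B.ncard = adjDim G

/-- `B` is a simultaneous adjacency basis of the family `ℋ`. -/
def IsSimAdjBasis {V : Type*} (ℋ : Set (SimpleGraph V)) (B : Set V) : Prop :=
  IsSimAdjGen ℋ B ∧ B.ncard = SdA ℋ

/-- `D` is a dominating set of `G`. -/
def IsDomSet {V : Type*} (G : SimpleGraph V) (D : Set V) : Prop :=
  ∀ v ∉ D, ∃ u ∈ D, G.Adj u v

/-- `D` is a simultaneous dominating set of the family `𝒢`. -/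
def IsSimDomSet {V : Type*} (𝒢 : Set (SimpleGraph V)) (D : Set V) : Prop :=
  ∀ G ∈ 𝒢, IsDomSet G D

/-- The simultaneous domination number of a family of graphs. -/
noncomputable def Sgamma {V : Type*} (𝒢 : Set (SimpleGraph V)) : ℕ :=
  sInf {n | ∃ D : Set V, D.ncard = n ∧ IsSimDomSet 𝒢 D}

/-- The domination number of a graph. -/
noncomputable def domNum {V : Type*} (G : SimpleGraph V) : ℕ := Sgamma {G}

/-- `γ'(G) = min over vertices `v` of `γ(G - v)`. -/
noncomputable def gammaPrime {V : Type*} (G : SimpleGraph V) : ℕ :=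
  sInf {n | ∃ v : V, n = domNum (G.induce {v}ᶜ)}

/-- The corona product `G ⊙ H`: one copy of `G` together with a copy of `H`
for each vertex `i` of `G`, joining `i` to every vertex of its copy. -/
def corona {V V' : Type*} (G : SimpleGraph V) (H : SimpleGraph V') :
    SimpleGraph (V ⊕ V × V') where
  Adj x y :=
    match x, y with
    | Sum.inl i, Sum.inl j => G.Adj i j
    | Sum.inl i, Sum.inr p => i = p.1
    | Sum.inr p, Sum.inl j => p.1 = j
    | Sum.inr p, Sum.inr q => p.1 = q.1 ∧ H.Adj p.2 q.2
  symm := by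
    constructor
    rintro (i | p) (j | q) h
    · exact G.adj_symm h
    · exact h.symm
    · exact h.symm
    · exact ⟨h.1.symm, H.adj_symm h.2⟩
  loopless := by
    constructor
    rintro (i | p) h
    · exact G.loopless.irrefl i h
    · exact H.loopless.irrefl p.2 h.2

/-- The family `{G ⊙ H : G ∈ 𝒢, H ∈ ℋ}` of corona products. -/
def coronaFam {V V' : Type*} (𝒢 : Set (SimpleGraph V)) (ℋ : Set (SimpleGraph V')) :
    Set (SimpleGraph (V ⊕ V × V')) :=
  {K | ∃ G ∈ 𝒢, ∃ H ∈ ℋ, K = corona G H}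

/-- The join `G + H` of two (vertex-disjoint) graphs. -/
def joinG {V₁ V₂ : Type*} (G : SimpleGraph V₁) (H : SimpleGraph V₂) :
    SimpleGraph (V₁ ⊕ V₂) where
  Adj x y :=
    match x, y with
    | Sum.inl a, Sum.inl b => G.Adj a b
    | Sum.inl _, Sum.inr _ => True
    | Sum.inr _, Sum.inl _ => True
    | Sum.inr a, Sum.inr b => H.Adj a b
  symm := by
    constructor
    rintro (a | a) (b | b) h
    · exact G.adj_symm h
    · trivial
    · trivial
    · exact H.adj_symm h
  loopless := by
    constructor
    rintro (a | a) h
    · exact G.loopless.irrefl a h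
    · exact H.loopless.irrefl a h

/-- The family `{G + H : G ∈ 𝒢, H ∈ ℋ}` of joins. -/
def joinFam {V₁ V₂ : Type*} (𝒢 : Set (SimpleGraph V₁)) (ℋ : Set (SimpleGraph V₂)) :
    Set (SimpleGraph (V₁ ⊕ V₂)) :=
  {K | ∃ G ∈ 𝒢, ∃ H ∈ ℋ, K = joinG G H}

/-- The family `𝒢_B(G)`: all graphs `G'` such that, for some permutation `f` of the
vertex set fixing `B` pointwise, `N_{G'}(x) = f(N_G(x))` for every `x ∈ B`. -/
def GBfam {V : Type*} (G : SimpleGraph V) (B : Set V) : Set (SimpleGraph V) :=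
  {G' | ∃ f : Equiv.Perm V, (∀ x ∈ B, f x = x) ∧
    ∀ x ∈ B, G'.neighborSet x = f '' (G.neighborSet x)}

/-!
In `G ⊙ H` a vertex outside the copy `H_i` reaches every vertex of `H_i` through the root `i`,
so it cannot separate two vertices of `H_i`; a vertex of `H_i` separates them exactly when it
separates them by adjacency, since distances inside a copy are 1 or 2. Hence every metric generator
of `G ⊙ H` meets each of the `|V|` copies in an adjacency generator of `H`. Conversely, a
permutation fixing `B` and carrying the `B`-neighbourhoods of `H` onto those of `H'` keeps `B` an
adjacency generator of `H'`, and the copies of `B` in all copies of `H'` resolve `G ⊙ H'`.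
-/

section Corona

variable {V V' : Type*} {G : SimpleGraph V} {H : SimpleGraph V'}

@[simp]
lemma corona_adj_inl_inr {i : V} {p : V × V'} : (corona G H).Adj (.inl i) (.inr p) ↔ i = p.1 :=
  Iff.rfl

@[simp]
lemma corona_adj_inr_inl {j : V} {p : V × V'} : (corona G H).Adj (.inr p) (.inl j) ↔ p.1 = j :=
  Iff.rfl

@[simp]
lemma corona_adj_inr_inr {p q : V × V'} :
    (corona G H).Adj (.inr p) (.inr q) ↔ p.1 = q.1 ∧ H.Adj p.2 q.2 := Iff.rfl

lemma corona_connected (hG : G.Connected) : (corona G H).Connected := by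
  obtain ⟨i₀⟩ := hG.nonempty
  have hinl : ∀ i, (corona G H).Reachable (.inl i₀) (.inl i) := fun i =>
    (hG i₀ i).map ⟨Sum.inl, id⟩
  refine (connected_iff_exists_forall_reachable _).mpr ⟨.inl i₀, ?_⟩
  rintro (i | ⟨i, x⟩)
  · exact hinl i
  · exact (hinl i).trans (Adj.reachable (by simp))

lemma corona_eq_inl_of_adj_inr {v : V ⊕ V × V'} {i : V} {y : V'} (hv : ∀ x, v ≠ .inr (i, x))
    (h : (corona G H).Adj v (.inr (i, y))) : v = .inl i := by
  rcases v with k | ⟨k, z⟩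
  · rw [corona_adj_inl_inr.mp h]
  · obtain rfl : k = i := (corona_adj_inr_inr.mp h).1
    exact absurd rfl (hv z)

lemma corona_inl_mem_support {s : V ⊕ V × V'} {i : V} {y : V'} (hs : ∀ x, s ≠ .inr (i, x))
    (p : (corona G H).Walk s (.inr (i, y))) : .inl i ∈ p.support := by
  obtain ⟨d, hd, hfst, hsnd⟩ :=
    p.exists_boundary_dart {v | ∀ x, v ≠ .inr (i, x)} hs (by simp)
  obtain ⟨x, hx⟩ : ∃ x, d.snd = .inr (i, x) := by simpa using hsnd
  rw [← corona_eq_inl_of_adj_inr hfst (hx ▸ d.adj)]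
  exact p.dart_fst_mem_support_of_mem_darts hd

lemma corona_dist_inl_inr_self {i : V} {b : V'} : (corona G H).dist (.inl i) (.inr (i, b)) = 1 :=
  dist_eq_one_iff_adj.mpr (corona_adj_inl_inr.mpr rfl)

lemma corona_dist_inr_inl_self {i : V} {b : V'} : (corona G H).dist (.inr (i, b)) (.inl i) = 1 :=
  dist_comm.trans corona_dist_inl_inr_self

lemma corona_dist_inr_of_forall_ne (hG : G.Connected) {s : V ⊕ V × V'} {i : V} {y : V'}
    (hs : ∀ x, s ≠ .inr (i, x)) :
    (corona G H).dist s (.inr (i, y)) = (corona G H).dist s (.inl i) + 1 := by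
  classical
  have hc : (corona G H).Connected := corona_connected hG
  obtain ⟨p, hp⟩ := hc.exists_walk_length_eq_dist s (.inr (i, y))
  have hmem := corona_inl_mem_support hs p
  refine le_antisymm ?_ ?_
  · calc (corona G H).dist s (.inr (i, y))
        ≤ (corona G H).dist s (.inl i) + (corona G H).dist (.inl i) (.inr (i, y)) :=
          hc.dist_triangle
      _ = (corona G H).dist s (.inl i) + 1 := by rw [corona_dist_inl_inr_self]
  · calc (corona G H).dist s (.inl i) + 1 ≤ (p.takeUntil _ hmem).length + 1 := by
          gcongr; exact dist_le _
      _ ≤ p.length := p.length_takeUntil_lt_length hmem (by simp)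
      _ = (corona G H).dist s (.inr (i, y)) := hp

lemma corona_two_le_dist_inr_inl (hG : G.Connected) {i j : V} (hij : i ≠ j) {b : V'} :
    2 ≤ (corona G H).dist (.inr (i, b)) (.inl j) := by
  rw [dist_comm, corona_dist_inr_of_forall_ne hG (by simp)]
  have := (corona_connected (H := H) hG).pos_dist_of_ne (Sum.inl_injective.ne hij.symm)
  omega

lemma corona_dist_inr_inr_of_adj {i : V} {b x : V'} (hbx : H.Adj b x) :
    (corona G H).dist (.inr (i, b)) (.inr (i, x)) = 1 :=
  dist_eq_one_iff_adj.mpr (by simp [hbx])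

lemma corona_dist_inr_inr_of_not_adj {i : V} {b x : V'} (hne : b ≠ x) (hbx : ¬H.Adj b x) :
    (corona G H).dist (.inr (i, b)) (.inr (i, x)) = 2 := by
  let w : (corona G H).Walk (.inr (i, b)) (.inr (i, x)) :=
    .cons (v := .inl i) (by simp) (.cons (by simp) .nil)
  have hlt := w.reachable.one_lt_dist_of_ne_of_not_adj (by simpa using hne) (by simpa using hbx)
  have hle : (corona G H).dist (.inr (i, b)) (.inr (i, x)) ≤ 2 := dist_le w
  omega

lemma corona_dist_inr_inr_le_two {i : V} {b x : V'} :
    (corona G H).dist (.inr (i, b)) (.inr (i, x)) ≤ 2 := by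
  rcases eq_or_ne b x with rfl | hne
  · simp
  by_cases hbx : H.Adj b x
  · simp [corona_dist_inr_inr_of_adj hbx]
  · simp [corona_dist_inr_inr_of_not_adj hne hbx]

lemma corona_dist_inr_inr_ne_iff {i : V} {b x y : V'} (hbx : b ≠ x) (hby : b ≠ y) :
    (corona G H).dist (.inr (i, b)) (.inr (i, x)) ≠ (corona G H).dist (.inr (i, b)) (.inr (i, y))
      ↔ Xor (H.Adj b x) (H.Adj b y) := by
  by_cases hx : H.Adj b x <;> by_cases hy : H.Adj b y <;>
    simp [hx, hy, corona_dist_inr_inr_of_adj, corona_dist_inr_inr_of_not_adj, hbx, hby]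

lemma IsMetricGen.isAdjGen_fiber (hG : G.Connected) {S : Set (V ⊕ V × V')}
    (hS : IsMetricGen (corona G H) S) (i : V) : IsAdjGen H {b | .inr (i, b) ∈ S} := by
  intro x y hx hy hxy
  obtain ⟨s, hsS, hd⟩ := hS (.inr (i, x)) (.inr (i, y)) (by simpa using hxy)
  obtain ⟨c, rfl⟩ : ∃ c, s = .inr (i, c) := by
    by_contra! hs
    exact hd (by rw [corona_dist_inr_of_forall_ne hG hs, corona_dist_inr_of_forall_ne hG hs])
  have hcx : c ≠ x := fun h => hx (h ▸ hsS)
  have hcy : c ≠ y := fun h => hy (h ▸ hsS)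
  exact ⟨c, hsS, (corona_dist_inr_inr_ne_iff hcx hcy).mp hd⟩

lemma IsAdjGen.nonempty [Nontrivial V'] {B : Set V'} (hB : IsAdjGen H B) : B.Nonempty := by
  rw [Set.nonempty_iff_ne_empty]
  rintro rfl
  obtain ⟨x, y, hxy⟩ := exists_pair_ne V'
  obtain ⟨s, hs, -⟩ := hB x y (Set.notMem_empty x) (Set.notMem_empty y) hxy
  exact hs

lemma IsAdjGen.of_mem_GBfam {H' : SimpleGraph V'} {B : Set V'} (hB : IsAdjGen H B)
    (hH' : H' ∈ GBfam H B) : IsAdjGen H' B := by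
  obtain ⟨f, hfix, hnbr⟩ := hH'
  have hadj : ∀ b ∈ B, ∀ z, H'.Adj b z ↔ H.Adj b (f.symm z) := fun b hb z => by
    simpa [Set.mem_image_equiv] using Set.ext_iff.mp (hnbr b hb) z
  have hmem : ∀ z, f.symm z ∈ B → z ∈ B := fun z hz => by
    have := hfix _ hz
    rw [Equiv.apply_symm_apply] at this
    rwa [this]
  intro x y hx hy hxy
  obtain ⟨b, hb, hxor⟩ :=
    hB (f.symm x) (f.symm y) (mt (hmem x) hx) (mt (hmem y) hy) (f.symm.injective.ne hxy)
  exact ⟨b, hb, by rwa [hadj b hb, hadj b hb]⟩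

lemma corona_exists_dist_ne_inl [Nontrivial V] (hG : G.Connected) (b : V') {i : V}
    {v : V ⊕ V × V'} (hv : v ≠ .inl i) :
    ∃ k, (corona G H).dist (.inr (k, b)) (.inl i) ≠ (corona G H).dist (.inr (k, b)) v := by
  rcases v with j | ⟨j, y⟩
  · refine ⟨i, ?_⟩
    rw [corona_dist_inr_inl_self]
    have := corona_two_le_dist_inr_inl (H := H) hG (by simpa [eq_comm] using hv) (b := b)
    omega
  by_cases hij : i = j
  · obtain ⟨k, hk⟩ := exists_ne j
    refine ⟨k, ?_⟩
    rw [corona_dist_inr_of_forall_ne hG (by simpa using hk), hij]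
    omega
  · refine ⟨i, ?_⟩
    rw [corona_dist_inr_inl_self, corona_dist_inr_of_forall_ne hG (by simpa using hij)]
    have := corona_two_le_dist_inr_inl (H := H) hG hij (b := b)
    omega

lemma corona_dist_inr_ne_of_fst_ne (hG : G.Connected) {i j : V} (hij : i ≠ j) {b x y : V'} :
    (corona G H).dist (.inr (i, b)) (.inr (i, x)) ≠
      (corona G H).dist (.inr (i, b)) (.inr (j, y)) := by
  rw [corona_dist_inr_of_forall_ne (i := j) hG (by simp [hij])]
  have := corona_dist_inr_inr_le_two (G := G) (H := H) (i := i) (b := b) (x := x)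
  have := corona_two_le_dist_inr_inl (H := H) hG hij (b := b)
  omega

lemma IsAdjGen.isMetricGen_corona [Nontrivial V] (hG : G.Connected) {B : Set V'}
    (hB : IsAdjGen H B) (hBne : B.Nonempty) :
    IsMetricGen (corona G H) (Sum.inr '' (Set.univ ×ˢ B)) := by
  have hmem : ∀ i, ∀ b ∈ B, (.inr (i, b) : V ⊕ V × V') ∈ Sum.inr '' (Set.univ ×ˢ B) :=
    fun i b hb => ⟨(i, b), ⟨trivial, hb⟩, rfl⟩
  obtain ⟨b₀, hb₀⟩ := hBne
  rintro (i | ⟨i, x⟩) v huv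
  · obtain ⟨k, hk⟩ := corona_exists_dist_ne_inl hG b₀ huv.symm
    exact ⟨_, hmem k b₀ hb₀, hk⟩
  rcases v with j | ⟨j, y⟩
  · obtain ⟨k, hk⟩ := corona_exists_dist_ne_inl hG b₀ huv
    exact ⟨_, hmem k b₀ hb₀, hk.symm⟩
  rcases eq_or_ne i j with rfl | hij
  · have hpos := (corona_connected (H := H) hG).pos_dist_of_ne huv
    by_cases hx : x ∈ B
    · exact ⟨_, hmem i x hx, by simpa using hpos.ne⟩
    by_cases hy : y ∈ B
    · exact ⟨_, hmem i y hy, by simpa [dist_comm] using hpos.ne'⟩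
    obtain ⟨b, hb, hxor⟩ := hB x y hx hy (by simpa using huv)
    exact ⟨_, hmem i b hb, (corona_dist_inr_inr_ne_iff (ne_of_mem_of_not_mem hb hx)
      (ne_of_mem_of_not_mem hb hy)).mpr hxor⟩
  · exact ⟨_, hmem i b₀ hb₀, corona_dist_inr_ne_of_fst_ne hG hij⟩

lemma ncard_inr_image_univ_prod [Fintype V] (B : Set V') :
    (Sum.inr '' (Set.univ ×ˢ B) : Set (V ⊕ V × V')).ncard = Fintype.card V * B.ncard := by
  rw [Set.ncard_image_of_injective _ Sum.inr_injective, Set.ncard_prod, Set.ncard_univ,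
    Nat.card_eq_fintype_card]

end Corona

open Classical in
lemma Set.ncard_eq_sum_ncard_fiber {α β : Type*} [Fintype α] [Fintype β] (T : Set (α × β)) :
    T.ncard = ∑ a, {b | (a, b) ∈ T}.ncard := by
  simp only [Set.ncard_eq_toFinset_card', Set.toFinset_ofPred, Finset.card_filter]
  rw [← Fintype.sum_prod_type', ← Finset.card_filter]
  simp

lemma card_mul_le_ncard_of_le_ncard_fiber {V V' : Type*} [Fintype V] [Fintype V']
    {S : Set (V ⊕ V × V')} {m : ℕ} (h : ∀ i, m ≤ {b | .inr (i, b) ∈ S}.ncard) :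
    Fintype.card V * m ≤ S.ncard := by
  calc Fintype.card V * m = ∑ _i : V, m := by simp
    _ ≤ ∑ i, {b | .inr (i, b) ∈ S}.ncard := Finset.sum_le_sum fun i _ => h i
    _ = (Sum.inr ⁻¹' S).ncard := (Set.ncard_eq_sum_ncard_fiber (Sum.inr ⁻¹' S)).symm
    _ ≤ S.ncard := by
      rw [← Set.ncard_image_of_injective _ Sum.inr_injective]
      exact Set.ncard_le_ncard (Set.image_preimage_subset _ S)

section Dimension

variable {V : Type*} {S : Set V}

lemma adjDim_le_ncard {G : SimpleGraph V} (hS : IsAdjGen G S) : adjDim G ≤ S.ncard :=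
  Nat.sInf_le ⟨S, rfl, fun _ hG' => (Set.mem_singleton_iff.mp hG') ▸ hS⟩

lemma Sd_le_ncard {𝒢 : Set (SimpleGraph V)} (hS : IsSimMetricGen 𝒢 S) : Sd 𝒢 ≤ S.ncard :=
  Nat.sInf_le ⟨S, rfl, hS⟩

lemma exists_isSimMetricGen_ncard_eq_Sd {𝒢 : Set (SimpleGraph V)} (hS : IsSimMetricGen 𝒢 S) :
    ∃ S : Set V, S.ncard = Sd 𝒢 ∧ IsSimMetricGen 𝒢 S :=
  Nat.sInf_mem (s := {n | ∃ S : Set V, S.ncard = n ∧ IsSimMetricGen 𝒢 S}) ⟨_, S, rfl, hS⟩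

end Dimension

theorem statement_3 {V V' : Type*} [Fintype V] [Fintype V'] [Nontrivial V] [Nontrivial V']
    (𝒢 : Set (SimpleGraph V)) (h𝒢ne : 𝒢.Nonempty) (h𝒢 : ∀ G ∈ 𝒢, G.Connected)
    (H : SimpleGraph V') (B : Set V') (hB : IsAdjBasis H B)
    (ℋ : Set (SimpleGraph V')) (hsub : ℋ ⊆ GBfam H B) (hH : H ∈ ℋ) :
    Sd (coronaFam 𝒢 ℋ) = Fintype.card V * adjDim H := by
  obtain ⟨hBgen, hBcard⟩ := hB
  have hgen : IsSimMetricGen (coronaFam 𝒢 ℋ) (Sum.inr '' (Set.univ ×ˢ B)) := by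
    rintro _ ⟨G, hG, H', hH', rfl⟩
    exact (hBgen.of_mem_GBfam (hsub hH')).isMetricGen_corona (h𝒢 G hG) hBgen.nonempty
  refine le_antisymm ?_ ?_
  · calc Sd (coronaFam 𝒢 ℋ) ≤ (Sum.inr '' (Set.univ ×ˢ B)).ncard := Sd_le_ncard hgen
      _ = Fintype.card V * adjDim H := by rw [ncard_inr_image_univ_prod, hBcard]
  · obtain ⟨S, hScard, hS⟩ := exists_isSimMetricGen_ncard_eq_Sd hgen
    obtain ⟨G, hG⟩ := h𝒢ne
    rw [← hScard]
    exact card_mul_le_ncard_of_le_ncard_fiber fun i =>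
      adjDim_le_ncard ((hS _ ⟨G, hG, H, hH, rfl⟩).isAdjGen_fiber (h𝒢 G hG) i)
end

section
/- Let 𝒢 be a family of connected non-trivial graphs on a common vertex set V, and let ℋ and ℋ' be families of non-trivial graphs on disjoint common vertex sets V'₁ and V'₂, respectively. If there exists a simultaneous adjacency basis B of ℋ satisfying B ⊄ N_H(v) for every H ∈ ℋ and every v ∈ V'₁, and for every simultaneous adjacency basis B' of ℋ' there exist H' ∈ ℋ' and v' ∈ V'₂ such that B' ⊆ N_{H'}(v'), then Sd_A(𝒢⊙(ℋ+ℋ')) = |V| · Sd_A(ℋ) + |V| · Sd_A(ℋ') + Sγ(𝒢). -/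
open SimpleGraph

/-!
Write `n = |V|`, `a = Sd_A(ℋ)` and `b = Sd_A(ℋ')`.

Upper bound: put a simultaneous dominating set `D` of `𝒢` in the base and a basis `B ∪ B'`
of the joins in every copy. The condition `B ⊄ N_H(v)` lets `B` separate the two sides of a join,
and `D` separates a base vertex `i` from the vertices of its own copy.

Lower bound: a simultaneous generator `S` restricts to generators of `ℋ` and of `ℋ'` in every
copy, so every copy carries at least `a + b` vertices of `S`. If the copy at a base vertex
`i ∉ S` carries exactly a basis `B'` of `ℋ'` on its `V'₂`-side, then `B' ⊆ N_{H'}(v')`, and only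
a neighbour of `i` in the base part of `S` can separate `(i, v')` from `i`. Hence the base part of
`S` together with the copies carrying more than `a + b` vertices dominates every `G ∈ 𝒢`, which
gives `|S| ≥ n (a + b) + Sγ(𝒢)`.
-/

theorem Set.ncard_eq_ncard_preimage_inl_add_ncard_preimage_inr {α β : Type*}
    [Finite α] [Finite β] (S : Set (α ⊕ β)) :
    S.ncard = (Sum.inl ⁻¹' S).ncard + (Sum.inr ⁻¹' S).ncard := by
  simp only [← Nat.card_coe_set_eq]
  exact (Nat.card_congr Equiv.subtypeSum).trans Nat.card_sum

theorem Set.ncard_eq_sum_ncard_preimage_prodMk {α β : Type*} [Fintype α] [Finite β]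
    (S : Set (α × β)) : S.ncard = ∑ a, (Prod.mk a ⁻¹' S).ncard := by
  simp only [← Nat.card_coe_set_eq]
  exact (Nat.card_congr (Equiv.subtypeProdEquivSigmaSubtype fun a b => (a, b) ∈ S)).trans
    Nat.card_sigma

theorem Set.ncard_add_card_mul_le_sum {ι : Type*} [Fintype ι] {c : ι → ℕ} {m : ℕ} {T : Set ι}
    (hm : ∀ i, m ≤ c i) (hT : ∀ i ∈ T, m < c i) :
    T.ncard + Fintype.card ι * m ≤ ∑ i, c i := by
  classical
  calc T.ncard + Fintype.card ι * m = ∑ i, ((if i ∈ T then 1 else 0) + m) := by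
        simp [Finset.sum_add_distrib, Finset.sum_boole, Set.ncard_eq_toFinset_card']
    _ ≤ ∑ i, c i := Finset.sum_le_sum fun i _ => by
        split_ifs with hi
        · have := hT i hi; omega
        · have := hm i; omega

theorem isAdjGen_iff {V : Type*} {G : SimpleGraph V} {S : Set V} :
    IsAdjGen G S ↔
      ∀ x y, x ∉ S → y ∉ S → x ≠ y → ∃ s ∈ S, ¬(G.Adj s x ↔ G.Adj s y) := by
  show (∀ x y, x ∉ S → y ∉ S → x ≠ y → ∃ s ∈ S, Xor _ _) ↔ _
  simp only [xor_iff_not_iff]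

section Dimension

variable {α : Type*} {F : Set (SimpleGraph α)}

theorem exists_isSimAdjGen_ncard_eq_SdA (F : Set (SimpleGraph α)) :
    ∃ S : Set α, S.ncard = SdA F ∧ IsSimAdjGen F S :=
  Nat.sInf_mem (s := {n | ∃ S : Set α, S.ncard = n ∧ IsSimAdjGen F S})
    ⟨_, Set.univ, rfl, fun _ _ x _ hx => absurd (Set.mem_univ x) hx⟩

theorem SdA_le_ncard {S : Set α} (h : IsSimAdjGen F S) : SdA F ≤ S.ncard :=
  Nat.sInf_le ⟨S, rfl, h⟩

theorem exists_isSimDomSet_ncard_eq_Sgamma (F : Set (SimpleGraph α)) :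
    ∃ D : Set α, D.ncard = Sgamma F ∧ IsSimDomSet F D :=
  Nat.sInf_mem (s := {n | ∃ D : Set α, D.ncard = n ∧ IsSimDomSet F D})
    ⟨_, Set.univ, rfl, fun _ _ v hv => absurd (Set.mem_univ v) hv⟩

theorem Sgamma_le_ncard {D : Set α} (h : IsSimDomSet F D) : Sgamma F ≤ D.ncard :=
  Nat.sInf_le ⟨D, rfl, h⟩

theorem IsSimAdjGen.nonempty [Nontrivial α] {S : Set α} (h : IsSimAdjGen F S)
    (hF : F.Nonempty) : S.Nonempty := by
  obtain ⟨x, y, hxy⟩ := exists_pair_ne α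
  rw [Set.nonempty_iff_ne_empty]
  rintro rfl
  obtain ⟨s, hs, -⟩ := h _ hF.some_mem x y id id hxy
  exact hs

end Dimension

section Corona

variable {V W : Type*} {G : SimpleGraph V} {K : SimpleGraph W}

@[simp] theorem corona_adj_inl_inl {i j : V} :
    (corona G K).Adj (Sum.inl i) (Sum.inl j) ↔ G.Adj i j := Iff.rfl

@[simp] theorem corona_adj_inl_inr_s17 {i j : V} {w : W} :
    (corona G K).Adj (Sum.inl i) (Sum.inr (j, w)) ↔ i = j := Iff.rfl

@[simp] theorem corona_adj_inr_inl_s17 {i j : V} {w : W} :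
    (corona G K).Adj (Sum.inr (i, w)) (Sum.inl j) ↔ i = j := Iff.rfl

@[simp] theorem corona_adj_inr_inr_s17 {i j : V} {u w : W} :
    (corona G K).Adj (Sum.inr (i, u)) (Sum.inr (j, w)) ↔ i = j ∧ K.Adj u w := Iff.rfl

theorem corona_mem_coronaFam {𝒢 : Set (SimpleGraph V)} {𝒦 : Set (SimpleGraph W)}
    (hG : G ∈ 𝒢) (hK : K ∈ 𝒦) : corona G K ∈ coronaFam 𝒢 𝒦 :=
  ⟨G, hG, K, hK, rfl⟩

def coronaFiber (S : Set (V ⊕ V × W)) (i : V) : Set W := {w | Sum.inr (i, w) ∈ S}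

theorem ncard_eq_ncard_preimage_inl_add_sum_ncard_coronaFiber [Fintype V] [Finite W]
    (S : Set (V ⊕ V × W)) :
    S.ncard = (Sum.inl ⁻¹' S).ncard + ∑ i, (coronaFiber S i).ncard := by
  rw [Set.ncard_eq_ncard_preimage_inl_add_ncard_preimage_inr,
    Set.ncard_eq_sum_ncard_preimage_prodMk]
  rfl

def coronaSet (D : Set V) (T : Set W) : Set (V ⊕ V × W) :=
  Sum.inl '' D ∪ Sum.inr '' (Set.univ ×ˢ T)

@[simp] theorem inl_mem_coronaSet {D : Set V} {T : Set W} {i : V} :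
    Sum.inl i ∈ coronaSet D T ↔ i ∈ D := by
  simp [coronaSet]

@[simp] theorem inr_mem_coronaSet {D : Set V} {T : Set W} {i : V} {w : W} :
    Sum.inr (i, w) ∈ coronaSet D T ↔ w ∈ T := by
  simp [coronaSet]

theorem ncard_coronaSet [Fintype V] [Finite W] (D : Set V) (T : Set W) :
    (coronaSet D T).ncard = D.ncard + Fintype.card V * T.ncard := by
  rw [ncard_eq_ncard_preimage_inl_add_sum_ncard_coronaFiber]
  simp [coronaFiber, Set.preimage]

end Corona

section CoronaGenerators

variable {V W : Type*} {G : SimpleGraph V} {K : SimpleGraph W} {S : Set (V ⊕ V × W)}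

theorem IsAdjGen.coronaFiber (h : IsAdjGen (corona G K) S) (i : V) :
    IsAdjGen K (coronaFiber S i) := by
  rw [isAdjGen_iff] at h ⊢
  intro x y hx hy hxy
  obtain ⟨s, hs, hdist⟩ := h (Sum.inr (i, x)) (Sum.inr (i, y)) hx hy (by simpa using hxy)
  rcases s with j | ⟨j, z⟩
  · simp at hdist
  · by_cases hji : j = i
    · subst hji
      exact ⟨z, hs, by simpa using hdist⟩
    · simp [hji] at hdist

theorem IsAdjGen.exists_adj_of_coronaFiber_subset (h : IsAdjGen (corona G K) S) {i : V}
    (hi : Sum.inl i ∉ S) {u : W} (hu : _root_.coronaFiber S i ⊆ K.neighborSet u) :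
    ∃ j ∈ Sum.inl ⁻¹' S, G.Adj j i := by
  rw [isAdjGen_iff] at h
  have hu' : Sum.inr (i, u) ∉ S := fun h => K.loopless.irrefl u (hu h)
  obtain ⟨s, hs, hdist⟩ := h (Sum.inr (i, u)) (Sum.inl i) hu' hi (by simp)
  rcases s with j | ⟨j, z⟩
  · have hji : j ≠ i := by rintro rfl; exact hi hs
    exact ⟨j, hs, by simpa [hji] using hdist⟩
  · have hji : j = i := by by_contra hji; simp [hji] at hdist
    subst hji
    exact absurd (by simpa using (hu hs).symm) hdist

theorem isAdjGen_corona [Nonempty W] {D : Set V} {T : Set W} (hD : IsDomSet G D)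
    (hT : IsAdjGen K T) (hTadj : ∀ u, ∃ t ∈ T, K.Adj t u) :
    IsAdjGen (corona G K) (coronaSet D T) := by
  rw [isAdjGen_iff] at hT ⊢
  obtain ⟨t₀, ht₀, -⟩ := hTadj (Classical.arbitrary W)
  have hdom {i : V} {w : W} (hi : Sum.inl i ∉ coronaSet D T) :
      ∃ s ∈ coronaSet D T,
        ¬((corona G K).Adj s (Sum.inl i) ↔ (corona G K).Adj s (Sum.inr (i, w))) := by
    obtain ⟨k, hk, hki⟩ := hD i (by simpa using hi)
    exact ⟨Sum.inl k, by simpa using hk, by simp [hki, hki.ne]⟩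
  rintro (i | ⟨i, u⟩) (j | ⟨j, w⟩) hx hy hxy
  · exact ⟨Sum.inr (i, t₀), by simpa using ht₀, by simpa using fun h : i = j => hxy (h ▸ rfl)⟩
  · by_cases hij : i = j
    · subst hij; exact hdom hx
    · exact ⟨Sum.inr (i, t₀), by simpa using ht₀, by simp [hij]⟩
  · by_cases hij : i = j
    · subst hij
      obtain ⟨s, hs, hdist⟩ := hdom (w := u) hy
      exact ⟨s, hs, fun h => hdist h.symm⟩
    · exact ⟨Sum.inr (j, t₀), by simpa using ht₀, by simp [Ne.symm hij]⟩
  · by_cases hij : i = j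
    · subst hij
      obtain ⟨t, ht, hdist⟩ := hT u w (by simpa using hx) (by simpa using hy) (by simpa using hxy)
      exact ⟨Sum.inr (i, t), by simpa using ht, by simpa using hdist⟩
    · obtain ⟨t, ht, htu⟩ := hTadj u
      exact ⟨Sum.inr (i, t), by simpa using ht, by simp [htu, hij]⟩

end CoronaGenerators

section Join

variable {V₁ V₂ : Type*} {H : SimpleGraph V₁} {H' : SimpleGraph V₂}

@[simp] theorem joinG_adj_inl_inl {a b : V₁} :
    (joinG H H').Adj (Sum.inl a) (Sum.inl b) ↔ H.Adj a b := Iff.rfl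

@[simp] theorem joinG_adj_inl_inr {a : V₁} {b : V₂} :
    (joinG H H').Adj (Sum.inl a) (Sum.inr b) := trivial

@[simp] theorem joinG_adj_inr_inl {a : V₂} {b : V₁} :
    (joinG H H').Adj (Sum.inr a) (Sum.inl b) := trivial

@[simp] theorem joinG_adj_inr_inr {a b : V₂} :
    (joinG H H').Adj (Sum.inr a) (Sum.inr b) ↔ H'.Adj a b := Iff.rfl

theorem joinG_mem_joinFam {ℋ : Set (SimpleGraph V₁)} {ℋ' : Set (SimpleGraph V₂)}
    (hH : H ∈ ℋ) (hH' : H' ∈ ℋ') : joinG H H' ∈ joinFam ℋ ℋ' :=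
  ⟨H, hH, H', hH', rfl⟩

theorem IsAdjGen.preimage_inl {T : Set (V₁ ⊕ V₂)} (h : IsAdjGen (joinG H H') T) :
    IsAdjGen H (Sum.inl ⁻¹' T) := by
  rw [isAdjGen_iff] at h ⊢
  intro x y hx hy hxy
  obtain ⟨s, hs, hdist⟩ := h (Sum.inl x) (Sum.inl y) hx hy (by simpa using hxy)
  rcases s with z | z
  · exact ⟨z, hs, by simpa using hdist⟩
  · simp at hdist

theorem IsAdjGen.preimage_inr {T : Set (V₁ ⊕ V₂)} (h : IsAdjGen (joinG H H') T) :
    IsAdjGen H' (Sum.inr ⁻¹' T) := by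
  rw [isAdjGen_iff] at h ⊢
  intro x y hx hy hxy
  obtain ⟨s, hs, hdist⟩ := h (Sum.inr x) (Sum.inr y) hx hy (by simpa using hxy)
  rcases s with z | z
  · simp at hdist
  · exact ⟨z, hs, by simpa using hdist⟩

theorem subset_joinG_neighborSet_inr {T : Set (V₁ ⊕ V₂)} {v : V₂}
    (h : Sum.inr ⁻¹' T ⊆ H'.neighborSet v) : T ⊆ (joinG H H').neighborSet (Sum.inr v) := by
  rintro (_ | b) hb
  · trivial
  · exact h hb

theorem isAdjGen_joinG {B : Set V₁} {B' : Set V₂} (hB : IsAdjGen H B) (hB' : IsAdjGen H' B')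
    (hBnsub : ∀ v, ¬B ⊆ H.neighborSet v) :
    IsAdjGen (joinG H H') (Sum.inl '' B ∪ Sum.inr '' B') := by
  have hnadj (v : V₁) : ∃ s ∈ B, ¬H.Adj s v := by
    simpa [Set.not_subset, adj_comm] using hBnsub v
  rw [isAdjGen_iff] at hB hB' ⊢
  rintro (a | a) (b | b) hx hy hxy
  · obtain ⟨s, hs, hdist⟩ := hB a b (by simpa using hx) (by simpa using hy) (by simpa using hxy)
    exact ⟨Sum.inl s, by simpa using hs, by simpa using hdist⟩
  · obtain ⟨s, hs, hsa⟩ := hnadj a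
    exact ⟨Sum.inl s, by simpa using hs, by simpa using hsa⟩
  · obtain ⟨s, hs, hsb⟩ := hnadj b
    exact ⟨Sum.inl s, by simpa using hs, by simpa using hsb⟩
  · obtain ⟨s, hs, hdist⟩ := hB' a b (by simpa using hx) (by simpa using hy) (by simpa using hxy)
    exact ⟨Sum.inr s, by simpa using hs, by simpa using hdist⟩

theorem exists_joinG_adj {B : Set V₁} {B' : Set V₂} (hB : B.Nonempty) (hB' : B'.Nonempty)
    (u : V₁ ⊕ V₂) : ∃ t ∈ Sum.inl '' B ∪ Sum.inr '' B', (joinG H H').Adj t u := by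
  obtain ⟨b, hb⟩ := hB
  obtain ⟨b', hb'⟩ := hB'
  rcases u with a | a
  · exact ⟨Sum.inr b', by simpa using hb', trivial⟩
  · exact ⟨Sum.inl b, by simpa using hb, trivial⟩

end Join

section Families

variable {V V₁ V₂ W : Type*}

theorem IsSimAdjGen.coronaFiber {𝒢 : Set (SimpleGraph V)} {𝒦 : Set (SimpleGraph W)}
    {S : Set (V ⊕ V × W)} (h : IsSimAdjGen (coronaFam 𝒢 𝒦) S) (h𝒢 : 𝒢.Nonempty) (i : V) :
    IsSimAdjGen 𝒦 (coronaFiber S i) := fun _ hK =>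
  (h _ (corona_mem_coronaFam h𝒢.some_mem hK)).coronaFiber i

theorem IsSimAdjGen.preimage_inl {ℋ : Set (SimpleGraph V₁)} {ℋ' : Set (SimpleGraph V₂)}
    {T : Set (V₁ ⊕ V₂)} (h : IsSimAdjGen (joinFam ℋ ℋ') T) (hℋ' : ℋ'.Nonempty) :
    IsSimAdjGen ℋ (Sum.inl ⁻¹' T) := fun _ hH =>
  (h _ (joinG_mem_joinFam hH hℋ'.some_mem)).preimage_inl

theorem IsSimAdjGen.preimage_inr {ℋ : Set (SimpleGraph V₁)} {ℋ' : Set (SimpleGraph V₂)}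
    {T : Set (V₁ ⊕ V₂)} (h : IsSimAdjGen (joinFam ℋ ℋ') T) (hℋ : ℋ.Nonempty) :
    IsSimAdjGen ℋ' (Sum.inr ⁻¹' T) := fun _ hH' =>
  (h _ (joinG_mem_joinFam hℋ.some_mem hH')).preimage_inr

end Families

section CoronaOfJoin

variable {V V₁ V₂ : Type*} {𝒢 : Set (SimpleGraph V)} {ℋ : Set (SimpleGraph V₁)}
  {ℋ' : Set (SimpleGraph V₂)}

theorem SdA_coronaFam_joinFam_le [Fintype V] [Finite V₁] [Nonempty V₁] [Finite V₂]
    [Nontrivial V₂] (hℋne : ℋ.Nonempty) (hℋ'ne : ℋ'.Nonempty)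
    (hB : ∃ B : Set V₁, IsSimAdjBasis ℋ B ∧ ∀ H ∈ ℋ, ∀ v : V₁, ¬B ⊆ H.neighborSet v) :
    SdA (coronaFam 𝒢 (joinFam ℋ ℋ')) ≤
      Fintype.card V * SdA ℋ + Fintype.card V * SdA ℋ' + Sgamma 𝒢 := by
  obtain ⟨B, ⟨hB, hBcard⟩, hBnsub⟩ := hB
  obtain ⟨B', hB'card, hB'⟩ := exists_isSimAdjGen_ncard_eq_SdA ℋ'
  obtain ⟨D, hDcard, hD⟩ := exists_isSimDomSet_ncard_eq_Sgamma 𝒢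
  have hBne : B.Nonempty :=
    (Set.nonempty_of_not_subset (hBnsub _ hℋne.some_mem (Classical.arbitrary V₁))).mono
      Set.sdiff_subset
  have hgen : IsSimAdjGen (coronaFam 𝒢 (joinFam ℋ ℋ'))
      (coronaSet D (Sum.inl '' B ∪ Sum.inr '' B')) := by
    rintro _ ⟨G, hG, _, ⟨H, hH, H', hH', rfl⟩, rfl⟩
    exact isAdjGen_corona (hD G hG) (isAdjGen_joinG (hB H hH) (hB' H' hH') (hBnsub H hH))
      (exists_joinG_adj hBne (hB'.nonempty hℋ'ne))
  have hjoin : (Sum.inl '' B ∪ Sum.inr '' B').ncard = B.ncard + B'.ncard := by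
    rw [Set.ncard_eq_ncard_preimage_inl_add_ncard_preimage_inr]
    simp [Set.preimage_image_eq _ Sum.inl_injective, Set.preimage_image_eq _ Sum.inr_injective]
  calc SdA (coronaFam 𝒢 (joinFam ℋ ℋ'))
      ≤ (coronaSet D (Sum.inl '' B ∪ Sum.inr '' B')).ncard := SdA_le_ncard hgen
    _ = Fintype.card V * SdA ℋ + Fintype.card V * SdA ℋ' + Sgamma 𝒢 := by
      rw [ncard_coronaSet, hjoin, hBcard, hB'card, hDcard]
      ring

theorem isSimDomSet_of_isSimAdjGen_coronaFam_joinFam {S : Set (V ⊕ V × (V₁ ⊕ V₂))}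
    (hS : IsSimAdjGen (coronaFam 𝒢 (joinFam ℋ ℋ')) S) (hℋne : ℋ.Nonempty)
    (hB' : ∀ B' : Set V₂, IsSimAdjBasis ℋ' B' → ∃ H' ∈ ℋ', ∃ v' : V₂, B' ⊆ H'.neighborSet v') :
    IsSimDomSet 𝒢
      (Sum.inl ⁻¹' S ∪ {i | ¬IsSimAdjBasis ℋ' (Sum.inr ⁻¹' coronaFiber S i)}) := by
  intro G hG i hi
  simp only [Set.mem_union, Set.mem_preimage, Set.mem_ofPred_eq, not_or, not_not] at hi
  obtain ⟨hiS, hbasis⟩ := hi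
  obtain ⟨H', hH', v', hsub⟩ := hB' _ hbasis
  have hK := hS _ (corona_mem_coronaFam hG (joinG_mem_joinFam hℋne.some_mem hH'))
  obtain ⟨j, hj, hji⟩ :=
    hK.exists_adj_of_coronaFiber_subset hiS (subset_joinG_neighborSet_inr hsub)
  exact ⟨j, Or.inl hj, hji⟩

theorem le_SdA_coronaFam_joinFam [Fintype V] [Finite V₁] [Finite V₂]
    (h𝒢ne : 𝒢.Nonempty) (hℋne : ℋ.Nonempty) (hℋ'ne : ℋ'.Nonempty)
    (hB' : ∀ B' : Set V₂, IsSimAdjBasis ℋ' B' → ∃ H' ∈ ℋ', ∃ v' : V₂, B' ⊆ H'.neighborSet v') :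
    Fintype.card V * SdA ℋ + Fintype.card V * SdA ℋ' + Sgamma 𝒢 ≤
      SdA (coronaFam 𝒢 (joinFam ℋ ℋ')) := by
  obtain ⟨S, hScard, hS⟩ := exists_isSimAdjGen_ncard_eq_SdA (coronaFam 𝒢 (joinFam ℋ ℋ'))
  set a : V → ℕ := fun i => (Sum.inl ⁻¹' coronaFiber S i).ncard
  set b : V → ℕ := fun i => (Sum.inr ⁻¹' coronaFiber S i).ncard
  set T := {i | ¬IsSimAdjBasis ℋ' (Sum.inr ⁻¹' coronaFiber S i)}
  have ha i : SdA ℋ ≤ a i := SdA_le_ncard ((hS.coronaFiber h𝒢ne i).preimage_inl hℋ'ne)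
  have hgen₂ i := (hS.coronaFiber h𝒢ne i).preimage_inr hℋne
  have hb i : SdA ℋ' ≤ b i := SdA_le_ncard (hgen₂ i)
  have hT : ∀ i ∈ T, SdA ℋ + SdA ℋ' < a i + b i := fun i hi => by
    have : b i ≠ SdA ℋ' := fun h => hi ⟨hgen₂ i, h⟩
    have := ha i; have := hb i
    omega
  have hcount := Set.ncard_add_card_mul_le_sum (fun i => Nat.add_le_add (ha i) (hb i)) hT
  have hdom := Sgamma_le_ncard (isSimDomSet_of_isSimAdjGen_coronaFam_joinFam hS hℋne hB')
  have hunion := Set.ncard_union_le (Sum.inl ⁻¹' S) T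
  calc Fintype.card V * SdA ℋ + Fintype.card V * SdA ℋ' + Sgamma 𝒢
      ≤ (Sum.inl ⁻¹' S).ncard + ∑ i, (a i + b i) := by
        linarith [mul_add (Fintype.card V) (SdA ℋ) (SdA ℋ')]
    _ = S.ncard := by
      simp only [a, b, ← Set.ncard_eq_ncard_preimage_inl_add_ncard_preimage_inr,
        ← ncard_eq_ncard_preimage_inl_add_sum_ncard_coronaFiber]
    _ = SdA (coronaFam 𝒢 (joinFam ℋ ℋ')) := hScard

end CoronaOfJoin

theorem statement_17_general {V V₁ V₂ : Type*} [Fintype V]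
    [Fintype V₁] [Nontrivial V₁] [Fintype V₂] [Nontrivial V₂]
    (𝒢 : Set (SimpleGraph V)) (h𝒢ne : 𝒢.Nonempty)
    (ℋ : Set (SimpleGraph V₁)) (hℋne : ℋ.Nonempty)
    (ℋ' : Set (SimpleGraph V₂)) (hℋ'ne : ℋ'.Nonempty)
    (hB : ∃ B : Set V₁, IsSimAdjBasis ℋ B ∧ ∀ H ∈ ℋ, ∀ v : V₁, ¬ B ⊆ H.neighborSet v)
    (hB' : ∀ B' : Set V₂, IsSimAdjBasis ℋ' B' →
      ∃ H' ∈ ℋ', ∃ v' : V₂, B' ⊆ H'.neighborSet v') :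
    SdA (coronaFam 𝒢 (joinFam ℋ ℋ')) =
      Fintype.card V * SdA ℋ + Fintype.card V * SdA ℋ' + Sgamma 𝒢 :=
  le_antisymm (SdA_coronaFam_joinFam_le hℋne hℋ'ne hB)
    (le_SdA_coronaFam_joinFam h𝒢ne hℋne hℋ'ne hB')

theorem statement_17 {V V₁ V₂ : Type*} [Fintype V] [Nontrivial V]
    [Fintype V₁] [Nontrivial V₁] [Fintype V₂] [Nontrivial V₂]
    (𝒢 : Set (SimpleGraph V)) (h𝒢ne : 𝒢.Nonempty) (h𝒢 : ∀ G ∈ 𝒢, G.Connected)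
    (ℋ : Set (SimpleGraph V₁)) (hℋne : ℋ.Nonempty)
    (ℋ' : Set (SimpleGraph V₂)) (hℋ'ne : ℋ'.Nonempty)
    (hB : ∃ B : Set V₁, IsSimAdjBasis ℋ B ∧ ∀ H ∈ ℋ, ∀ v : V₁, ¬ B ⊆ H.neighborSet v)
    (hB' : ∀ B' : Set V₂, IsSimAdjBasis ℋ' B' →
      ∃ H' ∈ ℋ', ∃ v' : V₂, B' ⊆ H'.neighborSet v') :
    SdA (coronaFam 𝒢 (joinFam ℋ ℋ')) =
      Fintype.card V * SdA ℋ + Fintype.card V * SdA ℋ' + Sgamma 𝒢 :=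
  statement_17_general 𝒢 h𝒢ne ℋ hℋne ℋ' hℋ'ne hB hB'
end
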